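/- arXiv:0810.2352 — 2 statements merged into one kernel-verified Lean document; each statement's English description precedes it below -/
import Mathlib

section
/- Consider the setting of transmitting independent sources over a discrete memoryless interference channel with deterministic side information about the interfering source: V1 = h1(U1) letterwise, (U1,V1) independent of (U2,V2), X_k^n = f_k^n(U_k^n) for k = 1,2, and Y1^n the output of the memoryless channel. Then the following two inequalities hold: n H(U1|V1) <= I(X1^n; Y1^n | V1^n, V2^n) + H(U1^n | Y1^n, V2^n), and n H(U1) = n H(V1) + n H(U1|V1) <= I(X1^n; Y1^n | V2^n) + H(U1^n | Y1^n, V2^n). -/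
/-! Write `U`, `V`, `V'`, `X`, `Y` for the blocks `U1^n`, `V1^n`, `V2^n`, `X1^n = f1(U1^n)`, `Y1^n`.
The joint law is (law of `U1^n`) × (law of `(U2^n, V2^n)`) × (channel kernel evaluated at `X1^n`
and `f2(U2^n)`). Hence `U` is independent of `V'`, and `U → (X, V, V') → Y` and
`U → (X, V') → Y` are Markov chains. The chain rule `H(U|Z) = I(X;Y|Z) + I(U;Y|X,Z) + H(U|Y,Z)`
for `Z = (V, V')` and `Z = V'`, in which the middle term vanishes, together with the i.i.d.
identities `H(U|V,V') = n H(U1|V1)` and `H(U|V') = n H(U1)`, gives both bounds; the only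
inequality used is `H(U|Y,V,V') ≤ H(U|Y,V')`, true because `V` is a function of `U`. -/

open Finset Real Filter
open scoped Classical

namespace Paper

/-- `p` is a probability mass function on the finite type `α`. -/
def IsPMF {α : Type*} [Fintype α] (p : α → ℝ) : Prop :=
  (∀ a, 0 ≤ p a) ∧ ∑ a, p a = 1

/-- `k` is a transition probability (channel) from `α` to the finite type `β`. -/
def IsKernel {α β : Type*} [Fintype β] (k : α → β → ℝ) : Prop :=
  ∀ a, IsPMF (k a)

variable {Ω : Type*} [Fintype Ω]

/-- Probability that the random variable `X` takes the value `x`, under the weight `p`. -/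
noncomputable def pr {α : Type*} (p : Ω → ℝ) (X : Ω → α) (x : α) : ℝ :=
  ∑ ω, if X ω = x then p ω else 0

/-- Shannon entropy (base 2) of the random variable `X` under `p`. -/
noncomputable def ent {α : Type*} [Fintype α] (p : Ω → ℝ) (X : Ω → α) : ℝ :=
  ∑ x, -(pr p X x * Real.logb 2 (pr p X x))

/-- Conditional entropy `H(X|Y) = H(X,Y) - H(Y)`. -/
noncomputable def condEnt {α β : Type*} [Fintype α] [Fintype β]
    (p : Ω → ℝ) (X : Ω → α) (Y : Ω → β) : ℝ :=
  ent p (fun ω => (X ω, Y ω)) - ent p Y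

/-- Mutual information `I(X;Y) = H(X) + H(Y) - H(X,Y)`. -/
noncomputable def mi {α β : Type*} [Fintype α] [Fintype β]
    (p : Ω → ℝ) (X : Ω → α) (Y : Ω → β) : ℝ :=
  ent p X + ent p Y - ent p (fun ω => (X ω, Y ω))

/-- Conditional mutual information `I(X;Y|Z) = H(X,Z) + H(Y,Z) - H(X,Y,Z) - H(Z)`. -/
noncomputable def cmi {α β γ : Type*} [Fintype α] [Fintype β] [Fintype γ]
    (p : Ω → ℝ) (X : Ω → α) (Y : Ω → β) (Z : Ω → γ) : ℝ :=
  ent p (fun ω => (X ω, Z ω)) + ent p (fun ω => (Y ω, Z ω))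
    - ent p (fun ω => (X ω, Y ω, Z ω)) - ent p Z

/-- The Markov chain `A → B → C`: `A` and `C` are conditionally independent given `B`. -/
def MarkovChain {α β γ : Type*} (p : Ω → ℝ) (A : Ω → α) (B : Ω → β) (C : Ω → γ) : Prop :=
  ∀ a b c, pr p (fun ω => (A ω, B ω, C ω)) (a, b, c) * pr p B b =
    pr p (fun ω => (A ω, B ω)) (a, b) * pr p (fun ω => (B ω, C ω)) (b, c)

section Marginals

variable {α β γ : Type*} {p : Ω → ℝ}

lemma pr_comp_eq_sum [Fintype α] (W : Ω → α) (f : α → β) (b : β) :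
    pr p (fun ω => f (W ω)) b = ∑ w, if f w = b then pr p W w else 0 := by
  unfold pr
  calc _ = ∑ ω, ∑ w, if W ω = w then (if f w = b then p ω else 0) else 0 := by simp
    _ = _ := by
      rw [Finset.sum_comm]
      refine Finset.sum_congr rfl fun w _ => ?_
      split_ifs <;> simp [*]

lemma pr_nonneg (hp : ∀ ω, 0 ≤ p ω) (X : Ω → α) (x : α) : 0 ≤ pr p X x :=
  Finset.sum_nonneg fun ω _ => by split_ifs <;> simp [hp ω]

lemma sum_pr [Fintype α] (X : Ω → α) : ∑ x, pr p X x = ∑ ω, p ω := by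
  simp only [pr]
  rw [Finset.sum_comm]
  simp

lemma pr_le_pr_comp [Fintype α] (hp : ∀ ω, 0 ≤ p ω) (W : Ω → α) (f : α → β) (w : α) :
    pr p W w ≤ pr p (fun ω => f (W ω)) (f w) := by
  rw [pr_comp_eq_sum W f]
  calc pr p W w = if f w = f w then pr p W w else 0 := (if_pos rfl).symm
    _ ≤ _ := Finset.single_le_sum (f := fun w' => if f w' = f w then pr p W w' else 0)
        (fun w' _ => by split_ifs <;> simp [pr_nonneg hp]) (Finset.mem_univ w)

lemma pr_comp_of_injective [Fintype α] (W : Ω → α) {g : α → β} (hg : g.Injective) (w : α) :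
    pr p (fun ω => g (W ω)) (g w) = pr p W w := by
  simp [pr_comp_eq_sum W g, hg.eq_iff]

lemma pr_snd_eq_sum [Fintype α] [Fintype β] (X : Ω → α) (Y : Ω → β) (y : β) :
    pr p Y y = ∑ x, pr p (fun ω => (X ω, Y ω)) (x, y) := by
  rw [pr_comp_eq_sum (fun ω => (X ω, Y ω)) Prod.snd, Fintype.sum_prod_type]
  simp

lemma pr_pair_eq_sum_triple [Fintype α] [Fintype β] [Fintype γ] (A : Ω → α) (B : Ω → β)
    (C : Ω → γ) (a : α) (b : β) :
    pr p (fun ω => (A ω, B ω)) (a, b) = ∑ c, pr p (fun ω => (A ω, B ω, C ω)) (a, b, c) := by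
  rw [pr_comp_eq_sum (fun ω => (A ω, B ω, C ω)) (fun w => (w.1, w.2.1))]
  simp only [Prod.ext_iff, ite_and, Fintype.sum_prod_type, Finset.sum_ite_irrel,
    Finset.sum_const_zero, Finset.sum_ite_eq', Finset.mem_univ, if_true]
  rw [Finset.sum_comm]
  simp

end Marginals

section Entropy

variable {α β γ δ : Type*} [Fintype α] [Fintype β] [Fintype γ] [Fintype δ] {p : Ω → ℝ}

lemma ent_comp_eq_sum (W : Ω → α) (f : α → β) :
    ent p (fun ω => f (W ω)) =
      ∑ w, -(pr p W w * logb 2 (pr p (fun ω => f (W ω)) (f w))) := by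
  unfold ent
  calc _ = ∑ b, ∑ w, if f w = b then
        -(pr p W w * logb 2 (pr p (fun ω => f (W ω)) b)) else 0 := by
        refine Finset.sum_congr rfl fun b _ => ?_
        rw [pr_comp_eq_sum W f b, Finset.sum_mul, ← Finset.sum_neg_distrib]
        refine Finset.sum_congr rfl fun w _ => ?_
        split_ifs <;> simp
    _ = _ := by
      rw [Finset.sum_comm]
      simp

lemma ent_comp_of_injective (W : Ω → α) {g : α → β}
    (hg : g.Injective) : ent p (fun ω => g (W ω)) = ent p W := by
  rw [ent_comp_eq_sum W g]
  simp only [pr_comp_of_injective W hg]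
  rfl

lemma condEnt_nonneg (hp : ∀ ω, 0 ≤ p ω) (X : Ω → α) (Y : Ω → β) :
    0 ≤ condEnt p X Y := by
  rw [condEnt, sub_nonneg]
  refine (ent_comp_eq_sum (fun ω => (X ω, Y ω)) Prod.snd).trans_le
    (Finset.sum_le_sum fun w _ => ?_)
  have hw := pr_le_pr_comp hp (fun ω => (X ω, Y ω)) Prod.snd w
  rcases (pr_nonneg hp (fun ω => (X ω, Y ω)) w).eq_or_lt with h0 | hpos
  · simp [← h0]
  · exact neg_le_neg (mul_le_mul_of_nonneg_left
      (logb_le_logb_of_le (by norm_num) hpos hw) hpos.le)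

lemma condEnt_id_eq_sub (k : Ω → β) : condEnt p id k = ent p id - ent p k := by
  have hpair : ent p (fun ω => (id ω, k ω)) = ent p id :=
    ent_comp_of_injective id (g := fun x => (x, k x)) fun a b h => congrArg Prod.fst h
  rw [condEnt, hpair]

lemma condEnt_pair_comp_le (hp : ∀ ω, 0 ≤ p ω) (X : Ω → α) (Y : Ω → β) (Z : Ω → γ)
    (k : α → δ) :
    condEnt p X (fun ω => (Y ω, k (X ω), Z ω)) ≤ condEnt p X (fun ω => (Y ω, Z ω)) := by
  have hXYZ : ent p (fun ω => (X ω, Y ω, k (X ω), Z ω)) = ent p (fun ω => (X ω, Y ω, Z ω)) :=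
    ent_comp_of_injective (fun ω => (X ω, Y ω, Z ω)) (g := fun w => (w.1, w.2.1, k w.1, w.2.2))
      fun a b h => by simp_all [Prod.ext_iff]
  have hYkXZ : ent p (fun ω => (Y ω, k (X ω), Z ω)) = ent p (fun ω => (k (X ω), Y ω, Z ω)) :=
    ent_comp_of_injective (fun ω => (k (X ω), Y ω, Z ω)) (g := fun w => (w.2.1, w.1, w.2.2))
      fun a b h => by simp_all [Prod.ext_iff]
  have hk := condEnt_nonneg hp (fun ω => k (X ω)) (fun ω => (Y ω, Z ω))
  simp only [condEnt] at hk ⊢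
  linarith

lemma condEnt_eq_cmi_add_condEnt (X : Ω → α) (Y : Ω → β) (Z : Ω → γ) :
    condEnt p X Z = cmi p X Y Z + condEnt p X (fun ω => (Y ω, Z ω)) := by
  simp only [cmi, condEnt]
  ring

lemma cmi_eq_cmi_comp_add (X : Ω → α) (Y : Ω → β) (Z : Ω → γ) (k : α → δ) :
    cmi p X Y Z = cmi p (fun ω => k (X ω)) Y Z + cmi p X Y (fun ω => (k (X ω), Z ω)) := by
  have hXZ : ent p (fun ω => (X ω, k (X ω), Z ω)) = ent p (fun ω => (X ω, Z ω)) :=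
    ent_comp_of_injective (fun ω => (X ω, Z ω)) (g := fun w => (w.1, k w.1, w.2))
      fun a b h => by simp_all [Prod.ext_iff]
  have hXYZ : ent p (fun ω => (X ω, Y ω, k (X ω), Z ω)) = ent p (fun ω => (X ω, Y ω, Z ω)) :=
    ent_comp_of_injective (fun ω => (X ω, Y ω, Z ω)) (g := fun w => (w.1, w.2.1, k w.1, w.2.2))
      fun a b h => by simp_all [Prod.ext_iff]
  have hYkXZ : ent p (fun ω => (Y ω, k (X ω), Z ω)) = ent p (fun ω => (k (X ω), Y ω, Z ω)) :=
    ent_comp_of_injective (fun ω => (k (X ω), Y ω, Z ω)) (g := fun w => (w.2.1, w.1, w.2.2))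
      fun a b h => by simp_all [Prod.ext_iff]
  simp only [cmi]
  linarith

lemma condEnt_eq_cmi_comp_add_cmi_add_condEnt (X : Ω → α) (Y : Ω → β) (Z : Ω → γ)
    (k : α → δ) :
    condEnt p X Z = cmi p (fun ω => k (X ω)) Y Z + cmi p X Y (fun ω => (k (X ω), Z ω)) +
      condEnt p X (fun ω => (Y ω, Z ω)) := by
  rw [condEnt_eq_cmi_add_condEnt X Y Z, cmi_eq_cmi_comp_add X Y Z k]

lemma cmi_comp_right_of_injective (X : Ω → α) (Y : Ω → β) (Z : Ω → γ)
    {e : γ → δ} (he : e.Injective) : cmi p X Y (fun ω => e (Z ω)) = cmi p X Y Z := by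
  have hXZ : ent p (fun ω => (X ω, e (Z ω))) = ent p (fun ω => (X ω, Z ω)) :=
    ent_comp_of_injective (fun ω => (X ω, Z ω)) (g := fun w => (w.1, e w.2))
      fun a b h => by simp_all [Prod.ext_iff, he.eq_iff]
  have hYZ : ent p (fun ω => (Y ω, e (Z ω))) = ent p (fun ω => (Y ω, Z ω)) :=
    ent_comp_of_injective (fun ω => (Y ω, Z ω)) (g := fun w => (w.1, e w.2))
      fun a b h => by simp_all [Prod.ext_iff, he.eq_iff]
  have hXYZ : ent p (fun ω => (X ω, Y ω, e (Z ω))) = ent p (fun ω => (X ω, Y ω, Z ω)) :=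
    ent_comp_of_injective (fun ω => (X ω, Y ω, Z ω)) (g := fun w => (w.1, w.2.1, e w.2.2))
      fun a b h => by simp_all [Prod.ext_iff, he.eq_iff]
  simp only [cmi, hXZ, hYZ, hXYZ, ent_comp_of_injective Z he]

end Entropy

section MarkovChain

variable {α β γ : Type*} [Fintype α] [Fintype β] [Fintype γ] {p : Ω → ℝ}

lemma markovChain_of_pr_eq_mul {A : Ω → α} {B : Ω → β} {C : Ω → γ}
    (g : α → β → ℝ) (k : β → γ → ℝ)
    (h : ∀ a b c, pr p (fun ω => (A ω, B ω, C ω)) (a, b, c) = g a b * k b c) :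
    MarkovChain p A B C := by
  have hAB : ∀ a b, pr p (fun ω => (A ω, B ω)) (a, b) = g a b * ∑ c, k b c := fun a b => by
    simp only [pr_pair_eq_sum_triple A B C, h, Finset.mul_sum]
  have hBC : ∀ b c, pr p (fun ω => (B ω, C ω)) (b, c) = (∑ a, g a b) * k b c := fun b c => by
    simp only [pr_snd_eq_sum A (fun ω => (B ω, C ω)), h, Finset.sum_mul]
  have hB : ∀ b, pr p B b = (∑ a, g a b) * ∑ c, k b c := fun b => by
    simp only [pr_snd_eq_sum A B, hAB, Finset.sum_mul]
  intro a b c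
  rw [h, hB, hAB, hBC]
  ring

/-- The `(x, z, y)`-summand of `I(X;Y|Z)`, where `r, a, b, c` are the probabilities of
`(x, z, y)`, `(x, z)`, `(z, y)` and `z`; the Markov property says `r * c = a * b`. -/
lemma cmi_summand_eq_zero {r a b c : ℝ} (hr : 0 ≤ r) (hrc : r ≤ c) (h : r * c = a * b) :
    -(r * logb 2 a) + -(r * logb 2 b) - -(r * logb 2 r) - -(r * logb 2 c) = 0 := by
  rcases hr.eq_or_lt with rfl | hr
  · simp
  have hc : c ≠ 0 := (hr.trans_le hrc).ne'
  have hab : a * b ≠ 0 := h ▸ mul_ne_zero hr.ne' hc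
  have hlog := congrArg (logb 2) h
  rw [logb_mul hr.ne' hc, logb_mul (left_ne_zero_of_mul hab) (right_ne_zero_of_mul hab)] at hlog
  linear_combination r * hlog

lemma cmi_eq_zero_of_markovChain (hp : ∀ ω, 0 ≤ p ω) {X : Ω → α} {Y : Ω → β} {Z : Ω → γ}
    (h : MarkovChain p X Z Y) : cmi p X Y Z = 0 := by
  set W := fun ω => (X ω, Z ω, Y ω)
  have hXYZ : ent p (fun ω => (X ω, Y ω, Z ω)) = ent p W :=
    ent_comp_of_injective W (g := fun w => (w.1, w.2.2, w.2.1))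
      fun a b h => by simp_all [Prod.ext_iff]
  have hYZ : ent p (fun ω => (Y ω, Z ω)) = ent p (fun ω => (Z ω, Y ω)) :=
    ent_comp_of_injective (fun ω => (Z ω, Y ω)) Prod.swap_injective
  rw [cmi, hXYZ, hYZ, ent_comp_eq_sum W (fun w => (w.1, w.2.1)),
    ent_comp_eq_sum W (fun w => w.2), ent_comp_eq_sum W (fun w => w.2.1), ent]
  simp only [← Finset.sum_add_distrib, ← Finset.sum_sub_distrib]
  refine Finset.sum_eq_zero fun ⟨x, z, y⟩ _ => ?_
  exact cmi_summand_eq_zero (pr_nonneg hp W _) (pr_le_pr_comp hp W (fun w => w.2.1) _)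
    (h x z y)

end MarkovChain

section ProductEntropy

variable {α β : Type*} [Fintype α]

lemma ent_eq_sum_negMulLog (p : Ω → ℝ) (X : Ω → α) :
    ent p X = (∑ x, negMulLog (pr p X x)) / log 2 := by
  rw [ent, Finset.sum_div]
  refine Finset.sum_congr rfl fun x _ => ?_
  rw [negMulLog, logb]
  ring

lemma sum_negMulLog_mul [Fintype β] {q : α → ℝ} {r : β → ℝ} (hq : ∑ a, q a = 1)
    (hr : ∑ b, r b = 1) :
    ∑ ab : α × β, negMulLog (q ab.1 * r ab.2) = ∑ a, negMulLog (q a) + ∑ b, negMulLog (r b) := by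
  simp only [negMulLog_mul, Fintype.sum_prod_type, Finset.sum_add_distrib, ← Finset.sum_mul,
    ← Finset.mul_sum, hr, one_mul, hq]

lemma sum_pi_prod_eq_one {q : α → ℝ} (hq : ∑ a, q a = 1) (n : ℕ) :
    ∑ u : Fin n → α, ∏ i, q (u i) = 1 := by
  rw [← Fintype.sum_pow, hq, one_pow]

lemma isPMF_pi {q : α → ℝ} (hq : IsPMF q) (n : ℕ) : IsPMF fun u : Fin n → α => ∏ i, q (u i) :=
  ⟨fun _ => Finset.prod_nonneg fun _ _ => hq.1 _, sum_pi_prod_eq_one hq.2 n⟩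

lemma sum_negMulLog_pi {q : α → ℝ} (hq : ∑ a, q a = 1) (n : ℕ) :
    ∑ u : Fin n → α, negMulLog (∏ i, q (u i)) = n * ∑ a, negMulLog (q a) := by
  induction n with
  | zero => simp
  | succ n ih =>
    rw [← (Fin.consEquiv fun _ => α).sum_comp]
    simp only [Fin.consEquiv_apply, Fin.prod_univ_succ, Fin.cons_zero, Fin.cons_succ]
    rw [sum_negMulLog_mul hq (sum_pi_prod_eq_one hq n), ih]
    push_cast
    ring

variable {n : ℕ}

lemma pr_pi_map (q : α → ℝ) (g : α → β) (w : Fin n → β) :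
    pr (fun u : Fin n → α => ∏ i, q (u i)) (fun u i => g (u i)) w = ∏ i, pr q g (w i) := by
  simp only [pr, Fintype.prod_sum, Finset.prod_ite_zero, Finset.mem_univ, forall_const,
    funext_iff]

lemma ent_pi_map [Fintype β] {q : α → ℝ} (hq : ∑ a, q a = 1) (g : α → β) :
    ent (fun u : Fin n → α => ∏ i, q (u i)) (fun u i => g (u i)) = n * ent q g := by
  rw [ent_eq_sum_negMulLog, ent_eq_sum_negMulLog]
  simp only [pr_pi_map]
  rw [sum_negMulLog_pi (by rw [sum_pr, hq]), mul_div_assoc]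

lemma condEnt_pi_map [Fintype β] {q : α → ℝ} (hq : ∑ a, q a = 1) (g : α → β) :
    condEnt (fun u : Fin n → α => ∏ i, q (u i)) id (fun u i => g (u i)) = n * condEnt q id g := by
  have hid : ent (fun u : Fin n → α => ∏ i, q (u i)) id = n * ent q id := ent_pi_map hq id
  rw [condEnt_id_eq_sub, condEnt_id_eq_sub, ent_pi_map hq g, hid, mul_sub]

end ProductEntropy

section InputOutputLaw

variable {α β γ α' β' τ : Type*}

def inputOutputLaw (μ : α → ℝ) (ν : β → ℝ) (κ : α → β → γ → ℝ) : α × β × γ → ℝ :=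
  fun ω => μ ω.1 * ν ω.2.1 * κ ω.1 ω.2.1 ω.2.2

variable {μ : α → ℝ} {ν : β → ℝ}

lemma inputOutputLaw_nonneg {κ : α → β → γ → ℝ} (hμ : ∀ a, 0 ≤ μ a) (hν : ∀ b, 0 ≤ ν b)
    (hκ : ∀ a b c, 0 ≤ κ a b c) (ω : α × β × γ) : 0 ≤ inputOutputLaw μ ν κ ω :=
  mul_nonneg (mul_nonneg (hμ _) (hν _)) (hκ _ _ _)

variable [Fintype α] [Fintype β] [Fintype γ]

lemma pr_inputOutputLaw_inputs {κ : α → β → γ → ℝ} (hκ : ∀ a b, ∑ c, κ a b c = 1)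
    (A : α → α') (B : β → β') (s : α') (t : β') :
    pr (inputOutputLaw μ ν κ) (fun ω => (A ω.1, B ω.2.1)) (s, t) = pr μ A s * pr ν B t := by
  simp only [pr, inputOutputLaw, Fintype.sum_prod_type, Prod.mk.injEq, ite_and]
  rw [Finset.sum_mul_sum]
  refine Finset.sum_congr rfl fun a _ => Finset.sum_congr rfl fun b _ => ?_
  split_ifs <;> simp [← Finset.mul_sum, hκ]

lemma pr_inputOutputLaw_triple (κ : τ → β → γ → ℝ) (S : α → τ) (B : β → β') (C : γ → γ')
    (a : α) (t : τ) (v : β') (y : γ') :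
    pr (inputOutputLaw μ ν fun a => κ (S a)) (fun ω => (ω.1, (S ω.1, B ω.2.1), C ω.2.2))
        (a, (t, v), y) =
      (if S a = t then μ a else 0) *
        ∑ b, if B b = v then ν b * ∑ c, if C c = y then κ t b c else 0 else 0 := by
  simp only [pr, inputOutputLaw, Fintype.sum_prod_type, Prod.mk.injEq, ite_and,
    Finset.sum_ite_irrel, Finset.sum_const_zero, Finset.sum_ite_eq', Finset.mem_univ, if_true]
  split_ifs with hS
  · subst hS
    simp only [Finset.mul_sum, mul_ite, mul_zero, mul_assoc]
  · simp

lemma markovChain_inputOutputLaw [Fintype τ] [Fintype β'] [Fintype γ'] (κ : τ → β → γ → ℝ)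
    (S : α → τ) (B : β → β') (C : γ → γ') :
    MarkovChain (inputOutputLaw μ ν fun a => κ (S a)) Prod.fst
      (fun ω => (S ω.1, B ω.2.1)) (fun ω => C ω.2.2) :=
  markovChain_of_pr_eq_mul (fun a tv => if S a = tv.1 then μ a else 0)
    (fun tv y => ∑ b, if B b = tv.2 then ν b * ∑ c, if C c = y then κ tv.1 b c else 0 else 0)
    fun a ⟨t, v⟩ y => pr_inputOutputLaw_triple κ S B C a t v y

lemma cmi_inputOutputLaw_eq_zero [Fintype τ] [Fintype β'] [Fintype γ'] (hμ : ∀ a, 0 ≤ μ a)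
    (hν : ∀ b, 0 ≤ ν b) {κ : τ → β → γ → ℝ} (hκ : ∀ t b c, 0 ≤ κ t b c) (S : α → τ)
    (B : β → β') (C : γ → γ') :
    cmi (inputOutputLaw μ ν fun a => κ (S a)) Prod.fst (fun ω => C ω.2.2)
      (fun ω => (S ω.1, B ω.2.1)) = 0 :=
  cmi_eq_zero_of_markovChain (inputOutputLaw_nonneg hμ hν fun a => hκ (S a))
    (markovChain_inputOutputLaw κ S B C)

variable {κ : α → β → γ → ℝ}

lemma ent_inputOutputLaw_inputs [Fintype α'] [Fintype β'] (hκ : ∀ a b, ∑ c, κ a b c = 1)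
    (hμ : ∑ a, μ a = 1) (hν : ∑ b, ν b = 1) (A : α → α') (B : β → β') :
    ent (inputOutputLaw μ ν κ) (fun ω => (A ω.1, B ω.2.1)) = ent μ A + ent ν B := by
  rw [ent_eq_sum_negMulLog, Fintype.sum_prod_type]
  simp only [pr_inputOutputLaw_inputs hκ]
  rw [← Fintype.sum_prod_type (f := fun st : α' × β' => negMulLog (pr μ A st.1 * pr ν B st.2)),
    sum_negMulLog_mul (by rw [sum_pr, hμ]) (by rw [sum_pr, hν]), add_div,
    ← ent_eq_sum_negMulLog, ← ent_eq_sum_negMulLog]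

lemma ent_inputOutputLaw_snd [Fintype β'] (hκ : ∀ a b, ∑ c, κ a b c = 1) (hμ : ∑ a, μ a = 1)
    (B : β → β') : ent (inputOutputLaw μ ν κ) (fun ω => B ω.2.1) = ent ν B := by
  have hpr : ∀ t, pr (inputOutputLaw μ ν κ) (fun ω => B ω.2.1) t = pr ν B t := fun t => by
    rw [pr_snd_eq_sum (fun ω => id ω.1)]
    simp only [pr_inputOutputLaw_inputs hκ, ← Finset.sum_mul, sum_pr, hμ, one_mul]
  simp only [ent, hpr]

lemma condEnt_inputOutputLaw_inputs [Fintype α'] [Fintype β'] (hκ : ∀ a b, ∑ c, κ a b c = 1)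
    (hμ : ∑ a, μ a = 1) (hν : ∑ b, ν b = 1) (A : α → α') (B : β → β') :
    condEnt (inputOutputLaw μ ν κ) (fun ω => A ω.1) (fun ω => B ω.2.1) = ent μ A := by
  rw [condEnt, ent_inputOutputLaw_inputs hκ hμ hν, ent_inputOutputLaw_snd hκ hμ,
    add_sub_cancel_right]

lemma condEnt_inputOutputLaw_fst_pair [Fintype α'] [Fintype β']
    (hκ : ∀ a b, ∑ c, κ a b c = 1) (hμ : ∑ a, μ a = 1) (hν : ∑ b, ν b = 1)
    (k : α → α') (B : β → β') :
    condEnt (inputOutputLaw μ ν κ) (fun ω => ω.1) (fun ω => (k ω.1, B ω.2.1)) =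
      condEnt μ id k := by
  have hU : ent (inputOutputLaw μ ν κ) (fun ω => (ω.1, k ω.1, B ω.2.1)) =
      ent (inputOutputLaw μ ν κ) (fun ω => (ω.1, B ω.2.1)) :=
    ent_comp_of_injective (fun ω : α × β × γ => (ω.1, B ω.2.1)) (g := fun w => (w.1, k w.1, w.2))
      fun a b h => by simp_all [Prod.ext_iff]
  rw [condEnt, hU, ent_inputOutputLaw_inputs hκ hμ hν (fun a => a),
    ent_inputOutputLaw_inputs hκ hμ hν k, add_sub_add_right_eq_sub, condEnt_id_eq_sub]
  rfl

end InputOutputLaw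

section Channel

variable {U2 V2 X1 X2 Y1 Y2 : Type*} {n : ℕ}

def channelKernel (ch : X1 × X2 → Y1 × Y2 → ℝ) (f2 : (Fin n → U2) → Fin n → X2)
    (x : Fin n → X1) (w : Fin n → U2 × V2) (c : Fin n → Y1 × Y2) : ℝ :=
  ∏ i, ch (x i, f2 (fun j => (w j).1) i) (c i)

variable [Fintype Y1] [Fintype Y2] {ch : X1 × X2 → Y1 × Y2 → ℝ}

lemma channelKernel_nonneg (hch : IsKernel ch) (f2 : (Fin n → U2) → Fin n → X2) (x : Fin n → X1)
    (w : Fin n → U2 × V2) (c : Fin n → Y1 × Y2) : 0 ≤ channelKernel ch f2 x w c :=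
  Finset.prod_nonneg fun _ _ => (hch _).1 _

lemma sum_channelKernel (hch : IsKernel ch) (f2 : (Fin n → U2) → Fin n → X2) (x : Fin n → X1)
    (w : Fin n → U2 × V2) : ∑ c, channelKernel ch f2 x w c = 1 := by
  simp only [channelKernel, ← Fintype.prod_sum, (hch _).2, Finset.prod_const_one]

end Channel

/-! ## Statement 9: converse inequalities for the interference channel with
deterministic side information `V1 = h1(U1)` (equations (56)–(66) of the paper). -/

section Stmt9

variable {U1 V1 U2 V2 X1 X2 Y1 Y2 : Type}
  [Fintype U1] [Fintype V1] [Fintype U2] [Fintype V2]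
  [Fintype X1] [Fintype X2] [Fintype Y1] [Fintype Y2]

/-- Joint law of `(U_1^n, (U_2^n, V_2^n), (Y_1^n, Y_2^n))` when the sources are i.i.d.,
the encoders are deterministic, and the channel is memoryless. -/
noncomputable def jointDet (ch : X1 × X2 → Y1 × Y2 → ℝ)
    (pU1 : U1 → ℝ) (q2 : U2 × V2 → ℝ) (n : ℕ)
    (f1 : (Fin n → U1) → Fin n → X1) (f2 : (Fin n → U2) → Fin n → X2) :
    (Fin n → U1) × (Fin n → U2 × V2) × (Fin n → Y1 × Y2) → ℝ :=
  fun (u1, uv2, y) =>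
    (∏ i, pU1 (u1 i)) * (∏ i, q2 (uv2 i)) *
      ∏ i, ch (f1 u1 i, f2 (fun j => (uv2 j).1) i) (y i)

theorem stmt9 (ch : X1 × X2 → Y1 × Y2 → ℝ)
    (pU1 : U1 → ℝ) (h1 : U1 → V1) (q2 : U2 × V2 → ℝ) (n : ℕ)
    (f1 : (Fin n → U1) → Fin n → X1) (f2 : (Fin n → U2) → Fin n → X2)
    (hch : IsKernel ch) (hpU1 : IsPMF pU1) (hq2 : IsPMF q2) :
    (let p := jointDet ch pU1 q2 n f1 f2
     let vU1 := fun (ω : (Fin n → U1) × (Fin n → U2 × V2) × (Fin n → Y1 × Y2)) => ω.1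
     let vV1 := fun (ω : (Fin n → U1) × (Fin n → U2 × V2) × (Fin n → Y1 × Y2)) =>
       fun i => h1 (ω.1 i)
     let vV2 := fun (ω : (Fin n → U1) × (Fin n → U2 × V2) × (Fin n → Y1 × Y2)) =>
       fun i => (ω.2.1 i).2
     let vX1 := fun (ω : (Fin n → U1) × (Fin n → U2 × V2) × (Fin n → Y1 × Y2)) => f1 ω.1
     let vY1 := fun (ω : (Fin n → U1) × (Fin n → U2 × V2) × (Fin n → Y1 × Y2)) =>
       fun i => (ω.2.2 i).1
     ((n : ℝ) * condEnt pU1 id h1 ≤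
        cmi p vX1 vY1 (fun ω => (vV1 ω, vV2 ω)) +
          condEnt p vU1 (fun ω => (vY1 ω, vV2 ω))) ∧
     ((n : ℝ) * ent pU1 id = (n : ℝ) * ent pU1 h1 + (n : ℝ) * condEnt pU1 id h1) ∧
     ((n : ℝ) * ent pU1 id ≤
        cmi p vX1 vY1 vV2 + condEnt p vU1 (fun ω => (vY1 ω, vV2 ω)))) := by
  intro p vU1 vV1 vV2 vX1 vY1
  have hlaw : p = inputOutputLaw (fun u => ∏ i, pU1 (u i)) (fun w => ∏ i, q2 (w i))
      (fun u => channelKernel ch f2 (f1 u)) := rfl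
  have hP := isPMF_pi hpU1 n
  have hQ := isPMF_pi hq2 n
  have hκ : ∀ u (w : Fin n → U2 × V2), ∑ c, channelKernel ch f2 (f1 u) w c = 1 :=
    fun u => sum_channelKernel hch f2 (f1 u)
  have hp : ∀ ω, 0 ≤ p ω :=
    hlaw ▸ inputOutputLaw_nonneg hP.1 hQ.1 fun u => channelKernel_nonneg hch f2 (f1 u)
  have hcmiV : cmi p vU1 vY1 (fun ω => (vX1 ω, vV1 ω, vV2 ω)) = 0 := by
    rw [cmi_comp_right_of_injective vU1 vY1 (fun ω => ((vX1 ω, vV1 ω), vV2 ω))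
      (e := fun t => (t.1.1, t.1.2, t.2)) fun a b h => by simp_all [Prod.ext_iff], hlaw]
    exact cmi_inputOutputLaw_eq_zero hP.1 hQ.1
      (fun t : (Fin n → X1) × (Fin n → V1) => channelKernel_nonneg hch f2 t.1)
      (fun u => (f1 u, fun i => h1 (u i))) (fun w i => (w i).2) (fun c i => (c i).1)
  have hcmi : cmi p vU1 vY1 (fun ω => (vX1 ω, vV2 ω)) = 0 := by
    rw [hlaw]
    exact cmi_inputOutputLaw_eq_zero hP.1 hQ.1 (channelKernel_nonneg hch f2) f1
      (fun w i => (w i).2) (fun c i => (c i).1)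
  have hcondV : condEnt p vU1 (fun ω => (vV1 ω, vV2 ω)) = n * condEnt pU1 id h1 := by
    rw [hlaw, condEnt_inputOutputLaw_fst_pair hκ hP.2 hQ.2 (fun u i => h1 (u i))
      (fun w i => (w i).2), condEnt_pi_map hpU1.2 h1]
  have hcond : condEnt p vU1 vV2 = n * ent pU1 id := by
    rw [hlaw, condEnt_inputOutputLaw_inputs hκ hP.2 hQ.2 (fun u => u) (fun w i => (w i).2)]
    exact ent_pi_map hpU1.2 id
  refine ⟨?_, by rw [condEnt_id_eq_sub]; ring, le_of_eq ?_⟩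
  · rw [← hcondV, condEnt_eq_cmi_comp_add_cmi_add_condEnt vU1 vY1 _ f1, hcmiV, add_zero]
    exact add_le_add le_rfl (condEnt_pair_comp_le hp vU1 vY1 vV2 fun u i => h1 (u i))
  · rw [← hcond, condEnt_eq_cmi_comp_add_cmi_add_condEnt vU1 vY1 vV2 f1, hcmi, add_zero]

end Stmt9

end Paper
end

section
/- Let a Z-interference channel satisfy Condition 1. Let (W_1s, X1^n) be arbitrary finitely-valued jointly distributed random variables, let X2^n be finitely-valued and independent of (W_1s, X1^n), let Y2^n be generated from (X1^n, X2^n) by the memoryless channel p(y2|x1,x2) applied componentwise, and let T^n be generated from X1^n by the memoryless channel Vhat2(t|x1) := p(y2 = t | x1, xbar2) applied componentwise, for a fixed element xbar2 of X2 (with Y2^n and T^n conditionally independent of everything else given the channel inputs). Then H(Y2^n | X2^n, W_1s) = H(T^n | W_1s). -/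
open Finset Real Filter
open scoped Classical

namespace Paper

variable {Ω : Type*} [Fintype Ω]

section ZChannel

variable {X1 X2 Y1 Y2 : Type} [Fintype X1] [Fintype X2] [Fintype Y1] [Fintype Y2]

/-- `H(Y_2^n | X_2^n = x_2^n)`: the output entropy of the `n`-letter channel
`p(y_2^n|x_1^n, x_2^n)` when `X_1^n ~ μ` and the second input is fixed to `x_2^n`. -/
noncomputable def entY2n (ch2 : X1 × X2 → Y2 → ℝ) (n : ℕ)
    (μ : (Fin n → X1) → ℝ) (x2 : Fin n → X2) : ℝ :=
  ent (fun w : (Fin n → X1) × (Fin n → Y2) => μ w.1 * ∏ i, ch2 (w.1 i, x2 i) (w.2 i)) Prod.snd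

/-- Condition 1: for every `n` and every input distribution `p(x_1^n)`,
`H(Y_2^n|X_2^n = x_2^n)` does not depend on `x_2^n`. -/
def Cond1 (ch2 : X1 × X2 → Y2 → ℝ) : Prop :=
  ∀ (n : ℕ) (μ : (Fin n → X1) → ℝ), IsPMF μ →
    ∀ x2 x2' : Fin n → X2, entY2n ch2 n μ x2 = entY2n ch2 n μ x2'

/-- The single-letter output entropy `H(Y_2)` for independent inputs `p(x_1) p(x_2)`. -/
noncomputable def entY2 (ch2 : X1 × X2 → Y2 → ℝ) (p1 : X1 → ℝ) (p2 : X2 → ℝ) : ℝ :=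
  ent (fun w : X1 × X2 × Y2 => p1 w.1 * p2 w.2.1 * ch2 (w.1, w.2.1) w.2.2) (fun w => w.2.2)

/-- `τ = max_{p(x_1) p(x_2)} H(Y_2)`. -/
noncomputable def tau (ch2 : X1 × X2 → Y2 → ℝ) : ℝ :=
  sSup { t | ∃ p1 p2, IsPMF p1 ∧ IsPMF p2 ∧ t = entY2 ch2 p1 p2 }

/-- Condition 2, with witness `p*`: for every `p(x_1)`, the output entropy `H(Y_2)` under
`p(x_1) p*(x_2)` equals `τ`. -/
def Cond2 (ch2 : X1 × X2 → Y2 → ℝ) (pstar : X2 → ℝ) : Prop :=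
  IsPMF pstar ∧ ∀ p1 : X1 → ℝ, IsPMF p1 → entY2 ch2 p1 pstar = tau ch2

end ZChannel

section Stmt14

variable {X1 X2 Y2 Wt : Type} [Fintype X1] [Fintype X2] [Fintype Y2] [Fintype Wt]

/-- Joint law of `(W_1s, X_1^n, X_2^n, Y_2^n, T^n)`, where `X_2^n` is independent of
`(W_1s, X_1^n)`, `Y_2^n` is the memoryless output of `p(y_2|x_1,x_2)`, and `T^n` is the
memoryless output of `Vhat2(t|x_1) = p(y_2 = t|x_1, x̄_2)`. -/
noncomputable def jointT (ch2 : X1 × X2 → Y2 → ℝ) (xbar2 : X2) (n : ℕ)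
    (μ : Wt × (Fin n → X1) → ℝ) (ν : (Fin n → X2) → ℝ) :
    Wt × (Fin n → X1) × (Fin n → X2) × (Fin n → Y2) × (Fin n → Y2) → ℝ :=
  fun (w, x1, x2, y2, t) =>
    μ (w, x1) * ν x2 * (∏ i, ch2 (x1 i, x2 i) (y2 i)) * ∏ i, ch2 (x1 i, xbar2) (t i)

end Stmt14

/-! Both conditional entropies are averages of output entropies of the `n`-letter channel.
Given `X₂ⁿ = x₂ⁿ` and `W = w`, `Y₂ⁿ` is the output for the input law `p(x₁ⁿ | w)` with
second input `x₂ⁿ`, and given `W = w`, `Tⁿ` is the output for the same input law with second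
input `x̄₂ⁿ`. Condition 1 equates the two entropies for every `w`, and averaging over the
independent `X₂ⁿ` gives the claim. -/

section FiniteDistributions

variable {Ω α β : Type*}

noncomputable def entropy [Fintype α] (f : α → ℝ) : ℝ :=
  ∑ a, -(f a * Real.logb 2 (f a))

lemma ent_eq_entropy_pr [Fintype Ω] [Fintype α] (p : Ω → ℝ) (X : Ω → α) :
    ent p X = entropy (pr p X) := rfl

lemma mul_logb_mul (x y : ℝ) :
    x * y * Real.logb 2 (x * y) = y * (x * Real.logb 2 x) + x * (y * Real.logb 2 y) := by
  rcases eq_or_ne x 0 with rfl | hx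
  · simp
  rcases eq_or_ne y 0 with rfl | hy
  · simp
  rw [Real.logb, Real.logb, Real.logb, Real.log_mul hx hy]
  ring

lemma entropy_chain_rule [Fintype α] [Fintype β] (q : β → ℝ) (f : β → α → ℝ)
    (hf : ∀ b, q b = 0 ∨ ∑ a, f b a = 1) :
    entropy (fun z : α × β => q z.2 * f z.2 z.1) = entropy q + ∑ b, q b * entropy (f b) := by
  rw [entropy, Fintype.sum_prod_type_right, entropy, ← Finset.sum_add_distrib]
  refine Finset.sum_congr rfl fun b _ => ?_
  rcases hf b with hq | hsum
  · simp [hq]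
  have hsplit : ∑ a, -(q b * f b a * Real.logb 2 (q b * f b a))
      = (∑ a, f b a) * -(q b * Real.logb 2 (q b)) + q b * entropy (f b) := by
    simp only [mul_logb_mul, entropy, Finset.sum_mul, Finset.mul_sum, ← Finset.sum_add_distrib]
    exact Finset.sum_congr rfl fun a _ => by ring
  rw [hsplit, hsum, one_mul]

lemma sum_pr_pair [Fintype Ω] [Fintype α] (p : Ω → ℝ) (X : Ω → α) (Y : Ω → β) (b : β) :
    ∑ a, pr p (fun ω => (X ω, Y ω)) (a, b) = pr p Y b := by
  simp only [pr, Prod.mk.injEq, ite_and]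
  rw [Finset.sum_comm]
  exact Finset.sum_congr rfl fun ω _ => by split_ifs <;> simp

lemma condEnt_eq_sum_mul_entropy [Fintype Ω] [Fintype α] [Fintype β]
    {p : Ω → ℝ} {X : Ω → α} {Y : Ω → β}
    (q : β → ℝ) (f : β → α → ℝ) (hf : ∀ b, q b = 0 ∨ ∑ a, f b a = 1)
    (hpr : ∀ a b, pr p (fun ω => (X ω, Y ω)) (a, b) = q b * f b a) :
    condEnt p X Y = ∑ b, q b * entropy (f b) := by
  have hY : pr p Y = q := funext fun b => by
    rw [← sum_pr_pair p X Y b]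
    simp only [hpr, ← Finset.mul_sum]
    rcases hf b with hq | hsum
    · rw [hq, zero_mul]
    · rw [hsum, mul_one]
  have hXY : pr p (fun ω => (X ω, Y ω)) = fun z => q z.2 * f z.2 z.1 :=
    funext fun z => hpr z.1 z.2
  rw [condEnt, ent_eq_entropy_pr, ent_eq_entropy_pr, hXY, hY, entropy_chain_rule q f hf]
  ring

lemma IsKernel.sum_pi_prod {ι : Type*} [Fintype ι] [DecidableEq ι] [Fintype β] {k : α → β → ℝ}
    (hk : IsKernel k) (a : ι → α) : ∑ b : ι → β, ∏ i, k (a i) (b i) = 1 := by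
  rw [← Fintype.prod_sum]
  simp [(hk _).2]

noncomputable def condDist [Fintype α] (μ : β × α → ℝ) (b : β) (a : α) : ℝ :=
  μ (b, a) / ∑ a', μ (b, a')

variable {μ : β × α → ℝ}

lemma isPMF_condDist [Fintype α] (hμ : ∀ z, 0 ≤ μ z) {b : β} (hb : ∑ a, μ (b, a) ≠ 0) :
    IsPMF (condDist μ b) := by
  refine ⟨fun a => div_nonneg (hμ _) (Finset.sum_nonneg fun a _ => hμ _), ?_⟩
  simp only [condDist, ← Finset.sum_div, div_self hb]

lemma sum_mul_condDist [Fintype α] (hμ : ∀ z, 0 ≤ μ z) (b : β) (a : α) :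
    (∑ a', μ (b, a')) * condDist μ b a = μ (b, a) := by
  rcases eq_or_ne (∑ a', μ (b, a')) 0 with h | h
  · rw [h, zero_mul]
    exact ((Finset.sum_eq_zero_iff_of_nonneg fun a _ => hμ (b, a)).1 h a (Finset.mem_univ a)).symm
  · exact mul_div_cancel₀ _ h

end FiniteDistributions

section Channel

variable {X1 X2 Y2 : Type} {n : ℕ}

noncomputable def outputLaw [Fintype X1] (ch2 : X1 × X2 → Y2 → ℝ) (μ : (Fin n → X1) → ℝ)
    (x2 : Fin n → X2) (y : Fin n → Y2) : ℝ :=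
  ∑ x1, μ x1 * ∏ i, ch2 (x1 i, x2 i) (y i)

variable {ch2 : X1 × X2 → Y2 → ℝ}

lemma sum_outputLaw [Fintype X1] [Fintype Y2] (hch2 : IsKernel ch2) (μ : (Fin n → X1) → ℝ)
    (x2 : Fin n → X2) :
    ∑ y, outputLaw ch2 μ x2 y = ∑ x1, μ x1 := by
  simp only [outputLaw]
  rw [Finset.sum_comm]
  simp only [← Finset.mul_sum, hch2.sum_pi_prod, mul_one]

lemma outputLaw_const_mul [Fintype X1] (c : ℝ) (μ : (Fin n → X1) → ℝ) (x2 : Fin n → X2)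
    (y : Fin n → Y2) :
    outputLaw ch2 (fun x1 => c * μ x1) x2 y = c * outputLaw ch2 μ x2 y := by
  simp only [outputLaw, Finset.mul_sum, mul_assoc]

lemma outputLaw_eq_sum_mul_condDist {W : Type} [Fintype X1] {μ : W × (Fin n → X1) → ℝ}
    (hμ : ∀ z, 0 ≤ μ z) (w : W) (x2 : Fin n → X2) (y : Fin n → Y2) :
    outputLaw ch2 (fun x1 => μ (w, x1)) x2 y
      = (∑ x1, μ (w, x1)) * outputLaw ch2 (condDist μ w) x2 y := by
  simp only [← outputLaw_const_mul, sum_mul_condDist hμ]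

lemma entY2n_eq_entropy_outputLaw [Fintype X1] [Fintype Y2] (μ : (Fin n → X1) → ℝ)
    (x2 : Fin n → X2) :
    entY2n ch2 n μ x2 = entropy (outputLaw ch2 μ x2) := by
  rw [entY2n, ent_eq_entropy_pr]
  congr 1
  funext y
  simp [pr, Fintype.sum_prod_type, outputLaw]

lemma Cond1.entropy_outputLaw_eq [Fintype X1] [Fintype Y2] (hc1 : Cond1 ch2)
    {μ : (Fin n → X1) → ℝ} (hμ : IsPMF μ) (x2 x2' : Fin n → X2) :
    entropy (outputLaw ch2 μ x2) = entropy (outputLaw ch2 μ x2') := by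
  simpa only [entY2n_eq_entropy_outputLaw] using hc1 n μ hμ x2 x2'

end Channel

section Stmt14

variable {X1 X2 Y2 Wt : Type} [Fintype X1] [Fintype X2] [Fintype Y2] [Fintype Wt]
variable {ch2 : X1 × X2 → Y2 → ℝ} {xbar2 : X2} {n : ℕ}
  {μ : Wt × (Fin n → X1) → ℝ} {ν : (Fin n → X2) → ℝ}

lemma pr_jointT_Y2_X2_W (hch2 : IsKernel ch2) (y : Fin n → Y2) (x2 : Fin n → X2) (w : Wt) :
    pr (jointT ch2 xbar2 n μ ν)
      (fun ω : Wt × (Fin n → X1) × (Fin n → X2) × (Fin n → Y2) × (Fin n → Y2) =>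
        (ω.2.2.2.1, (ω.2.2.1, ω.1))) (y, (x2, w))
      = ν x2 * outputLaw ch2 (fun x1 => μ (w, x1)) x2 y := by
  simp only [pr, jointT, outputLaw, Fintype.sum_prod_type, Prod.mk.injEq, ite_and,
    Finset.sum_ite_irrel, Finset.sum_const_zero, Finset.sum_ite_eq', Finset.mem_univ, if_true]
  rw [Finset.mul_sum]
  refine Finset.sum_congr rfl fun x1 _ => ?_
  rw [← Finset.mul_sum, hch2.sum_pi_prod]
  ring

lemma pr_jointT_T_W (hch2 : IsKernel ch2) (hν : IsPMF ν) (t : Fin n → Y2) (w : Wt) :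
    pr (jointT ch2 xbar2 n μ ν)
      (fun ω : Wt × (Fin n → X1) × (Fin n → X2) × (Fin n → Y2) × (Fin n → Y2) =>
        (ω.2.2.2.2, ω.1)) (t, w)
      = outputLaw ch2 (fun x1 => μ (w, x1)) (fun _ => xbar2) t := by
  simp only [pr, jointT, outputLaw, Fintype.sum_prod_type, Prod.mk.injEq, ite_and,
    Finset.sum_ite_irrel, Finset.sum_const_zero, Finset.sum_ite_eq', Finset.mem_univ, if_true]
  refine Finset.sum_congr rfl fun x1 _ => ?_
  simp only [← Finset.sum_mul, ← Finset.mul_sum, hch2.sum_pi_prod, mul_one, hν.2]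

theorem stmt14 (ch2 : X1 × X2 → Y2 → ℝ) (hch2 : IsKernel ch2) (hc1 : Cond1 ch2)
    (xbar2 : X2) (n : ℕ)
    (μ : Wt × (Fin n → X1) → ℝ) (ν : (Fin n → X2) → ℝ)
    (hμ : IsPMF μ) (hν : IsPMF ν) :
    (let p := jointT ch2 xbar2 n μ ν
     let vW := fun (ω : Wt × (Fin n → X1) × (Fin n → X2) × (Fin n → Y2) × (Fin n → Y2)) =>
       ω.1
     let vX2 := fun (ω : Wt × (Fin n → X1) × (Fin n → X2) × (Fin n → Y2) × (Fin n → Y2)) =>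
       ω.2.2.1
     let vY2 := fun (ω : Wt × (Fin n → X1) × (Fin n → X2) × (Fin n → Y2) × (Fin n → Y2)) =>
       ω.2.2.2.1
     let vT := fun (ω : Wt × (Fin n → X1) × (Fin n → X2) × (Fin n → Y2) × (Fin n → Y2)) =>
       ω.2.2.2.2
     condEnt p vY2 (fun ω => (vX2 ω, vW ω)) = condEnt p vT vW) := by
  intro p vW vX2 vY2 vT
  set P : Wt → ℝ := fun w => ∑ x1, μ (w, x1)
  have hlaw (w : Wt) : P w = 0 ∨ IsPMF (condDist μ w) :=
    (eq_or_ne (P w) 0).imp_right (isPMF_condDist hμ.1)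
  have hsum (w : Wt) (x2 : Fin n → X2) (h : IsPMF (condDist μ w)) :
      ∑ y, outputLaw ch2 (condDist μ w) x2 y = 1 := by
    rw [sum_outputLaw hch2, h.2]
  have hY2 : condEnt p vY2 (fun ω => (vX2 ω, vW ω))
      = ∑ b : (Fin n → X2) × Wt, ν b.1 * P b.2 * entropy (outputLaw ch2 (condDist μ b.2) b.1) :=
    condEnt_eq_sum_mul_entropy _ _
      (fun b => (hlaw b.2).imp (fun h => by simp [h]) (hsum b.2 b.1))
      fun y b => by
        rw [pr_jointT_Y2_X2_W hch2, outputLaw_eq_sum_mul_condDist hμ.1, mul_assoc]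
  have hT : condEnt p vT vW = ∑ w, P w * entropy (outputLaw ch2 (condDist μ w) fun _ => xbar2) :=
    condEnt_eq_sum_mul_entropy _ _ (fun w => (hlaw w).imp_right (hsum w _))
      fun t w => by rw [pr_jointT_T_W hch2 hν, outputLaw_eq_sum_mul_condDist hμ.1]
  rw [hY2, hT, Fintype.sum_prod_type]
  calc ∑ x2, ∑ w, ν x2 * P w * entropy (outputLaw ch2 (condDist μ w) x2)
      = ∑ x2, ν x2 * ∑ w, P w * entropy (outputLaw ch2 (condDist μ w) fun _ => xbar2) := by
        refine Finset.sum_congr rfl fun x2 _ => ?_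
        rw [Finset.mul_sum]
        refine Finset.sum_congr rfl fun w _ => ?_
        rcases hlaw w with h | h
        · simp [h]
        · rw [hc1.entropy_outputLaw_eq h x2 fun _ => xbar2, mul_assoc]
    _ = _ := by rw [← Finset.sum_mul, hν.2, one_mul]

end Stmt14

end Paper
end
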